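/- Let n ≥ 2, k ∈ [2,n]∩ℕ, Φ a Young function, φ ∈ G₁^dec, and a₀,…,a_{k−1} > 0. Then the cube-based Orlicz–Morrey functional of the characteristic function of ∏_{j=0}^{k−1}[0,a_j]×ℝ^{n−k} satisfies sup_{b∈ℝⁿ,R>0}(1/φ(R))‖χ_{∏_{j=0}^{k−1}[0,a_j]×ℝ^{n−k}}‖_{Φ,Q(b,R/2)} = sup_{R>0}(1/φ(R))·[Φ⁻¹(R^k/∏_{j=0}^{k−1}min(a_j,R))]^{−1}. -/

import Mathlib

open MeasureTheory Filter Set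
open scoped ENNReal NNReal

noncomputable section

/-- A Young function: convex on `[0,∞)`, vanishing at `0`, nonnegative, tending to `∞`. -/
def IsYoung (Φ : ℝ → ℝ) : Prop :=
  ConvexOn ℝ (Set.Ici 0) Φ ∧ Φ 0 = 0 ∧ (∀ t, 0 ≤ t → 0 ≤ Φ t) ∧
    Filter.Tendsto Φ Filter.atTop Filter.atTop

/-- Almost decreasing on `(0,∞)`: `g s ≤ C * g r` whenever `0 < r < s`. -/
def AlmostDecreasingOn (g : ℝ → ℝ) : Prop :=
  ∃ C > 0, ∀ r s : ℝ, 0 < r → r < s → g s ≤ C * g r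

/-- Almost increasing on `(0,∞)`: `g r ≤ C * g s` whenever `0 < r < s`. -/
def AlmostIncreasingOn (g : ℝ → ℝ) : Prop :=
  ∃ C > 0, ∀ r s : ℝ, 0 < r → r < s → g r ≤ C * g s

/-- The class `G₁^dec`: positive, almost decreasing and submultiplicative on `(0,∞)`. -/
def G1dec (φ : ℝ → ℝ) : Prop :=
  (∀ r : ℝ, 0 < r → 0 < φ r) ∧ AlmostDecreasingOn φ ∧
    ∃ C > 0, ∀ r s : ℝ, 0 < r → 0 < s → φ (r * s) ≤ C * φ r * φ s

/-- The class `G₂^dec`: `φ ∈ G₀ ∩ G₁^dec` and `φ(1/r) ≤ C/φ(r)`. -/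
def G2dec (φ : ℝ → ℝ) : Prop :=
  G1dec φ ∧ Filter.Tendsto φ (nhdsWithin 0 (Set.Ioi 0)) Filter.atTop ∧
    Filter.Tendsto φ Filter.atTop (nhds 0) ∧
    ∃ C > 0, ∀ r : ℝ, 0 < r → φ r⁻¹ ≤ C / φ r

/-- Generalized inverse of a Young function: `Φ⁻¹(u) = inf {t ≥ 0 : Φ(t) > u}`. -/
def yInv (Φ : ℝ → ℝ) (u : ℝ) : ℝ := sInf {t : ℝ | 0 ≤ t ∧ u < Φ t}

/-- The closed cube `Q(b,r) = {x : max_i |x_i − b_i| ≤ r}` in `ℝⁿ`. -/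
def cube {n : ℕ} (b : EuclideanSpace ℝ (Fin n)) (r : ℝ) : Set (EuclideanSpace ℝ (Fin n)) :=
  {x | ∀ i, |x i - b i| ≤ r}

/-- The Luxemburg-type norm of `f` on the cube `Q(b,r)`. -/
def cubeLux {n : ℕ} (Φ : ℝ → ℝ) (b : EuclideanSpace ℝ (Fin n)) (r : ℝ)
    (f : EuclideanSpace ℝ (Fin n) → ℝ) : ℝ≥0∞ :=
  sInf {lam : ℝ≥0∞ | ∃ l : ℝ, 0 < l ∧ lam = ENNReal.ofReal l ∧
    (∫ x in cube b r, Φ (|f x| / l)) ≤ (volume (cube b r)).toReal}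

end

/-!
For a measurable set `E`, the modular of `λ⁻¹ χ_E` on a cube `Q` is `|Q ∩ E| Φ(1/λ) / |Q|`, so
the Luxemburg norm of `χ_E` on `Q` is `1 / Φ⁻¹(|Q| / |Q ∩ E|)` (and `0` if `|Q ∩ E| = 0`).
As `Φ⁻¹` is monotone, for a fixed side length `R` the supremum over centres is attained where
`|Q ∩ E|` is largest. For the slab `E = ∏_{j<k} [0, a_j] × ℝ^{n-k}` the set `Q ∩ E` is a box
whose `j`-th side is at most `min(a_j, R)` for `j < k` and exactly `R` otherwise, with equality
for a cube touching the origin; hence `|Q| / |Q ∩ E| = R^k / ∏_{j<k} min(a_j, R)`. The weight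
`1 / φ(R)` depends on `R` only and comes out of the supremum over centres.
-/

namespace IsYoung

variable {Φ : ℝ → ℝ}

theorem apply_mul_le (hΦ : IsYoung Φ) {θ t : ℝ} (hθ₀ : 0 ≤ θ) (hθ₁ : θ ≤ 1) (ht : 0 ≤ t) :
    Φ (θ * t) ≤ θ * Φ t := by
  have := hΦ.1.2 (mem_Ici.2 le_rfl) ht (sub_nonneg.2 hθ₁) hθ₀ (by ring)
  simpa [hΦ.2.1] using this

theorem monotoneOn (hΦ : IsYoung Φ) : MonotoneOn Φ (Ici 0) := by
  intro s (hs : 0 ≤ s) t (ht : 0 ≤ t) hst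
  rcases ht.eq_or_lt with rfl | ht
  · rw [le_antisymm hst hs]
  calc Φ s = Φ (s / t * t) := by rw [div_mul_cancel₀ s ht.ne']
    _ ≤ s / t * Φ t := hΦ.apply_mul_le (by positivity) ((div_le_one ht).2 hst) ht.le
    _ ≤ Φ t := mul_le_of_le_one_left (hΦ.2.2.1 t ht.le) ((div_le_one ht).2 hst)

theorem nonempty_setOf_lt_apply (hΦ : IsYoung Φ) (u : ℝ) :
    {t : ℝ | 0 ≤ t ∧ u < Φ t}.Nonempty := by
  obtain ⟨t, hut, ht⟩ :=
    ((hΦ.2.2.2.eventually (eventually_gt_atTop u)).and (eventually_ge_atTop 0)).exists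
  exact ⟨t, ht, hut⟩

theorem le_yInv (hΦ : IsYoung Φ) {u t : ℝ} (ht : 0 ≤ t) (h : Φ t ≤ u) : t ≤ yInv Φ u := by
  refine le_csInf (hΦ.nonempty_setOf_lt_apply u) fun s ⟨hs, hus⟩ => ?_
  by_contra! hst
  exact (h.trans_lt hus).not_ge (hΦ.monotoneOn hs ht hst.le)

theorem apply_le_of_lt_yInv {u t : ℝ} (ht : 0 ≤ t) (h : t < yInv Φ u) : Φ t ≤ u := by
  by_contra! hut
  exact h.not_ge (csInf_le ⟨0, fun _ hs => hs.1⟩ ⟨ht, hut⟩)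

theorem yInv_pos (hΦ : IsYoung Φ) {u : ℝ} (hu : 0 < u) : 0 < yInv Φ u := by
  have hΦ₁ : 0 ≤ Φ 1 := hΦ.2.2.1 1 zero_le_one
  refine (div_pos hu (by positivity : 0 < Φ 1 + u)).trans_le (hΦ.le_yInv (by positivity) ?_)
  calc Φ (u / (Φ 1 + u)) = Φ (u / (Φ 1 + u) * 1) := by rw [mul_one]
    _ ≤ u / (Φ 1 + u) * Φ 1 :=
      hΦ.apply_mul_le (by positivity) ((div_le_one (by positivity)).2 (by linarith)) zero_le_one
    _ ≤ u := by
      rw [div_mul_eq_mul_div, div_le_iff₀ (by positivity)]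
      nlinarith

theorem yInv_mono (hΦ : IsYoung Φ) : Monotone (yInv Φ) := fun _ v huv =>
  csInf_le_csInf ⟨0, fun _ ht => ht.1⟩ (hΦ.nonempty_setOf_lt_apply v)
    fun _ ht => ⟨ht.1, huv.trans_lt ht.2⟩

-- `yInv Φ u` separates `{t ≥ 0 | Φ t ≤ u}` from `{t ≥ 0 | u < Φ t}`, so this is exact.
theorem sInf_ofReal_setOf_apply_inv_le (hΦ : IsYoung Φ) {u : ℝ} (hu : 0 < u) :
    sInf {lam : ℝ≥0∞ | ∃ l : ℝ, 0 < l ∧ lam = ENNReal.ofReal l ∧ Φ l⁻¹ ≤ u} =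
      ENNReal.ofReal (yInv Φ u)⁻¹ := by
  have hτ := hΦ.yInv_pos hu
  refine le_antisymm (le_of_forall_gt_imp_ge_of_dense fun lam hlam => ?_) ?_
  · rcases eq_or_ne lam ⊤ with rfl | hlam_top
    · exact le_top
    lift lam to ℝ≥0 using hlam_top
    have hl : (yInv Φ u)⁻¹ < lam :=
      (ENNReal.ofReal_lt_iff_lt_toReal (by positivity) ENNReal.coe_ne_top).1 hlam
    have hl₀ : (0 : ℝ) < lam := (inv_pos.2 hτ).trans hl
    exact sInf_le ⟨lam, hl₀, by simp,
      apply_le_of_lt_yInv (inv_nonneg.2 hl₀.le) ((inv_lt_comm₀ hτ hl₀).1 hl)⟩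
  · refine le_sInf ?_
    rintro _ ⟨l, hl, rfl, hlu⟩
    exact ENNReal.ofReal_le_ofReal ((inv_le_comm₀ hl hτ).1 (hΦ.le_yInv (by positivity) hlu))

end IsYoung

theorem EuclideanSpace.setOf_forall_mem_eq_preimage {ι : Type*} (s : ι → Set ℝ) :
    {x : EuclideanSpace ℝ ι | ∀ i, x i ∈ s i} = WithLp.ofLp ⁻¹' univ.pi s := by
  ext x
  simp [Set.mem_pi]

theorem EuclideanSpace.volume_setOf_forall_mem {ι : Type*} [Fintype ι] (s : ι → Set ℝ) :
    volume {x : EuclideanSpace ℝ ι | ∀ i, x i ∈ s i} = ∏ i, volume (s i) := by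
  rw [setOf_forall_mem_eq_preimage, ← volume_pi_pi]
  exact (EuclideanSpace.volume_preserving_symm_measurableEquiv_toLp ι).measure_preimage_equiv _

theorem EuclideanSpace.measurableSet_setOf_forall_mem {ι : Type*} [Fintype ι] {s : ι → Set ℝ}
    (hs : ∀ i, MeasurableSet (s i)) : MeasurableSet {x : EuclideanSpace ℝ ι | ∀ i, x i ∈ s i} := by
  rw [setOf_forall_mem_eq_preimage]
  exact (MeasurableSet.univ_pi hs).preimage (PiLp.volume_preserving_ofLp ι).measurable

theorem setIntegral_comp_indicator_one {α : Type*} [MeasurableSpace α] {μ : Measure α}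
    {Φ : ℝ → ℝ} (hΦ₀ : Φ 0 = 0) {E : Set α} (hE : MeasurableSet E) (S : Set α) (l : ℝ) :
    ∫ x in S, Φ (|E.indicator (fun _ => (1 : ℝ)) x| / l) ∂μ = μ.real (S ∩ E) * Φ l⁻¹ := by
  have : (fun x => Φ (|E.indicator (fun _ => (1 : ℝ)) x| / l)) = E.indicator fun _ => Φ l⁻¹ := by
    ext x
    by_cases hx : x ∈ E <;> simp [hx, hΦ₀]
  rw [this, setIntegral_indicator hE, setIntegral_const, smul_eq_mul]

theorem isGreatest_volumeReal_Icc_inter_Icc {r a : ℝ} (hr : 0 ≤ r) (ha : 0 ≤ a) :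
    IsGreatest (range fun c => volume.real (Icc (c - r) (c + r) ∩ Icc 0 a)) (min a (2 * r)) := by
  simp only [Icc_inter_Icc, Real.volume_real_Icc]
  refine ⟨⟨min a (2 * r) / 2, ?_⟩, ?_⟩
  · dsimp only
    rcases le_total a (2 * r) with h | h
    · rw [min_eq_left h, max_eq_right (by linarith : a / 2 - r ≤ 0),
        min_eq_right (by linarith : a ≤ a / 2 + r)]
      simp [ha]
    · rw [min_eq_right h, max_eq_right (by linarith : 2 * r / 2 - r ≤ 0),
        min_eq_left (by linarith : 2 * r / 2 + r ≤ a)]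
      simp [hr, two_mul]
  · rintro _ ⟨c, rfl⟩
    refine max_le (le_min ?_ ?_) (le_min ha (by linarith))
    · linarith [min_le_right (c + r) a, le_max_right (c - r) 0]
    · linarith [min_le_left (c + r) a, le_max_left (c - r) 0]

section Cube

variable {n : ℕ}

theorem cube_eq_setOf_forall_mem_Icc (b : EuclideanSpace ℝ (Fin n)) (r : ℝ) :
    cube b r = {x | ∀ i, x i ∈ Icc (b i - r) (b i + r)} := by
  ext x
  exact forall_congr' fun i => by rw [abs_sub_comm, mem_Icc_iff_abs_le]

theorem cube_inter_setOf_forall_mem (b : EuclideanSpace ℝ (Fin n)) (r : ℝ) (s : Fin n → Set ℝ) :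
    cube b r ∩ {x | ∀ i, x i ∈ s i} = {x | ∀ i, x i ∈ Icc (b i - r) (b i + r) ∩ s i} := by
  ext x
  simp only [cube_eq_setOf_forall_mem_Icc, mem_inter_iff, mem_ofPred_eq, forall_and]

theorem volume_cube_ne_top (b : EuclideanSpace ℝ (Fin n)) (r : ℝ) : volume (cube b r) ≠ ⊤ := by
  rw [cube_eq_setOf_forall_mem_Icc, EuclideanSpace.volume_setOf_forall_mem]
  exact ENNReal.prod_ne_top fun i _ => measure_Icc_lt_top.ne

theorem volumeReal_cube (b : EuclideanSpace ℝ (Fin n)) {r : ℝ} (hr : 0 ≤ r) :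
    volume.real (cube b r) = (2 * r) ^ n := by
  rw [measureReal_def, cube_eq_setOf_forall_mem_Icc, EuclideanSpace.volume_setOf_forall_mem,
    ENNReal.toReal_prod]
  simp [Real.volume_Icc, ENNReal.toReal_ofReal (by linarith : 0 ≤ r + r), two_mul]

theorem isGreatest_volumeReal_cube_inter_setOf_forall_mem (r : ℝ) {s : Fin n → Set ℝ}
    {g : Fin n → ℝ}
    (h : ∀ i, IsGreatest (range fun c => volume.real (Icc (c - r) (c + r) ∩ s i)) (g i)) :
    IsGreatest (range fun b => volume.real (cube b r ∩ {x | ∀ i, x i ∈ s i})) (∏ i, g i) := by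
  have hvol : ∀ b : EuclideanSpace ℝ (Fin n), volume.real (cube b r ∩ {x | ∀ i, x i ∈ s i}) =
      ∏ i, volume.real (Icc (b i - r) (b i + r) ∩ s i) := fun b => by
    rw [measureReal_def, cube_inter_setOf_forall_mem, EuclideanSpace.volume_setOf_forall_mem,
      ENNReal.toReal_prod]
    rfl
  choose c hc using fun i => (h i).1
  refine ⟨⟨WithLp.toLp 2 c, ?_⟩, ?_⟩
  · simp only [hvol]
    exact Finset.prod_congr rfl fun i _ => hc i
  · rintro _ ⟨b, rfl⟩
    exact (hvol b).trans_le <|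
      Finset.prod_le_prod (fun i _ => measureReal_nonneg) fun i _ => (h i).2 ⟨b i, rfl⟩

variable {Φ : ℝ → ℝ} {E : Set (EuclideanSpace ℝ (Fin n))}

theorem cubeLux_indicator_of_volumeReal_eq_zero (hΦ₀ : Φ 0 = 0) (hE : MeasurableSet E)
    (b : EuclideanSpace ℝ (Fin n)) (r : ℝ) (h : volume.real (cube b r ∩ E) = 0) :
    cubeLux Φ b r (E.indicator fun _ => 1) = 0 := by
  refine le_antisymm (ENNReal.le_of_forall_pos_le_add fun ε hε _ => sInf_le ?_) zero_le
  refine ⟨ε, hε, by simp, ?_⟩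
  rw [setIntegral_comp_indicator_one hΦ₀ hE, h, zero_mul]
  exact ENNReal.toReal_nonneg

theorem cubeLux_indicator_of_volumeReal_pos (hΦ : IsYoung Φ) (hE : MeasurableSet E)
    (b : EuclideanSpace ℝ (Fin n)) (r : ℝ) (h : 0 < volume.real (cube b r ∩ E)) :
    cubeLux Φ b r (E.indicator fun _ => 1) =
      ENNReal.ofReal (yInv Φ (volume.real (cube b r) / volume.real (cube b r ∩ E)))⁻¹ := by
  have hle : volume.real (cube b r ∩ E) ≤ volume.real (cube b r) :=
    measureReal_mono inter_subset_left (volume_cube_ne_top b r)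
  rw [← hΦ.sInf_ofReal_setOf_apply_inv_le (div_pos (h.trans_le hle) h), cubeLux]
  congr 1
  ext lam
  refine exists_congr fun l => and_congr_right fun _ => and_congr_right fun _ => ?_
  rw [setIntegral_comp_indicator_one hΦ.2.1 hE, ← measureReal_def, le_div_iff₀' h]

theorem iSup_cubeLux_indicator (hΦ : IsYoung Φ) (hE : MeasurableSet E) {r M : ℝ} (hr : 0 ≤ r)
    (hM : 0 < M) (hmax : IsGreatest (range fun b => volume.real (cube b r ∩ E)) M) :
    ⨆ b, cubeLux Φ b r (E.indicator fun _ => 1) =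
      ENNReal.ofReal (yInv Φ ((2 * r) ^ n / M))⁻¹ := by
  obtain ⟨⟨b₀, hb₀ : volume.real (cube b₀ r ∩ E) = M⟩, hle⟩ := hmax
  have hV : 0 < (2 * r) ^ n := by
    rw [← volumeReal_cube b₀ hr]
    exact (hb₀ ▸ hM).trans_le (measureReal_mono inter_subset_left (volume_cube_ne_top b₀ r))
  refine le_antisymm (iSup_le fun b => ?_) ?_
  · rcases (measureReal_nonneg : 0 ≤ volume.real (cube b r ∩ E)).eq_or_lt with h | h
    · rw [cubeLux_indicator_of_volumeReal_eq_zero hΦ.2.1 hE b r h.symm]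
      exact zero_le
    rw [cubeLux_indicator_of_volumeReal_pos hΦ hE b r h, volumeReal_cube b hr]
    gcongr
    · exact hΦ.yInv_pos (by positivity)
    · exact hΦ.yInv_mono (div_le_div_of_nonneg_left hV.le h (hle ⟨b, rfl⟩))
  · refine le_iSup_of_le b₀ (le_of_eq ?_)
    rw [cubeLux_indicator_of_volumeReal_pos hΦ hE b₀ r (hb₀ ▸ hM), hb₀, volumeReal_cube b₀ hr]

end Cube

theorem pow_div_prod_ite_val_lt {n k : ℕ} (hkn : k ≤ n) {R : ℝ} (hR : R ≠ 0) (c : Fin n → ℝ) :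
    R ^ n / ∏ i : Fin n, (if (i : ℕ) < k then c i else R) =
      R ^ k / ∏ i ∈ Finset.univ.filter (fun i : Fin n => (i : ℕ) < k), c i := by
  calc R ^ n / ∏ i : Fin n, (if (i : ℕ) < k then c i else R)
      = ∏ i : Fin n, R / (if (i : ℕ) < k then c i else R) := by
        rw [Finset.prod_div_distrib, Fin.prod_const]
    _ = ∏ i : Fin n, (if (i : ℕ) < k then R / c i else 1) :=
        Finset.prod_congr rfl fun i _ => by split_ifs <;> simp [hR]
    _ = R ^ k / ∏ i ∈ Finset.univ.filter (fun i : Fin n => (i : ℕ) < k), c i := by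
        rw [← Finset.prod_filter, Finset.prod_div_distrib, Finset.prod_const,
          Fin.card_filter_val_lt, min_eq_right hkn]

theorem setOf_forall_val_lt_mem_Icc_eq {n k : ℕ} (a : Fin n → ℝ) :
    {x : EuclideanSpace ℝ (Fin n) | ∀ j : Fin n, (j : ℕ) < k → x j ∈ Icc 0 (a j)} =
      {x | ∀ i : Fin n, x i ∈ if (i : ℕ) < k then Icc 0 (a i) else univ} := by
  ext x
  refine forall_congr' fun i => ?_
  split_ifs <;> simp [*]

theorem iSup_cubeLux_indicator_slab {n k : ℕ} (hkn : k ≤ n) {Φ : ℝ → ℝ} (hΦ : IsYoung Φ)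
    {a : Fin n → ℝ} (ha : ∀ j : Fin n, (j : ℕ) < k → 0 < a j) {R : ℝ} (hR : 0 < R) :
    ⨆ b, cubeLux Φ b (R / 2) (Set.indicator {x : EuclideanSpace ℝ (Fin n) |
        ∀ j : Fin n, (j : ℕ) < k → x j ∈ Icc 0 (a j)} fun _ => 1) =
      ENNReal.ofReal (yInv Φ (R ^ k /
        ∏ j ∈ Finset.univ.filter (fun j : Fin n => (j : ℕ) < k), min (a j) R))⁻¹ := by
  have hmax : IsGreatest (range fun b => volume.real (cube b (R / 2) ∩
      {x | ∀ i : Fin n, x i ∈ if (i : ℕ) < k then Icc 0 (a i) else univ}))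
      (∏ i : Fin n, if (i : ℕ) < k then min (a i) R else R) := by
    refine isGreatest_volumeReal_cube_inter_setOf_forall_mem _ fun i => ?_
    split_ifs with hi
    · simpa [mul_div_cancel₀] using
        isGreatest_volumeReal_Icc_inter_Icc (by positivity : 0 ≤ R / 2) (ha i hi).le
    · simp [Real.volume_real_Icc, hR.le]
  rw [setOf_forall_val_lt_mem_Icc_eq, iSup_cubeLux_indicator hΦ ?_ (by positivity) ?_ hmax,
    mul_div_cancel₀ R two_ne_zero, pow_div_prod_ite_val_lt hkn hR.ne']
  · exact EuclideanSpace.measurableSet_setOf_forall_mem fun i => by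
      split_ifs
      exacts [measurableSet_Icc, .univ]
  · exact Finset.prod_pos fun i _ => by split_ifs with hi; exacts [lt_min (ha i hi) hR, hR]

theorem statement15_general {n k : ℕ} (hkn : k ≤ n)
    (Φ φ : ℝ → ℝ) (hΦ : IsYoung Φ) (hφ : G1dec φ)
    (a : Fin n → ℝ) (ha : ∀ j : Fin n, (j : ℕ) < k → 0 < a j) :
    (⨆ (b : EuclideanSpace ℝ (Fin n)) (R : ℝ) (_ : 0 < R),
        (ENNReal.ofReal (φ R))⁻¹ * cubeLux Φ b (R / 2)
          (Set.indicator {x : EuclideanSpace ℝ (Fin n) |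
              ∀ j : Fin n, (j : ℕ) < k → x j ∈ Set.Icc 0 (a j)} (fun _ => (1 : ℝ)))) =
      ⨆ (R : ℝ) (_ : 0 < R),
        ENNReal.ofReal ((φ R)⁻¹ *
          (yInv Φ (R ^ k /
            ∏ j ∈ Finset.univ.filter (fun j : Fin n => (j : ℕ) < k), min (a j) R))⁻¹) := by
  rw [iSup_comm]
  refine iSup_congr fun R => ?_
  rw [iSup_comm]
  refine iSup_congr fun hR => ?_
  rw [← ENNReal.mul_iSup, iSup_cubeLux_indicator_slab hkn hΦ ha hR,
    ENNReal.ofReal_mul (inv_nonneg.2 (hφ.1 R hR).le), ENNReal.ofReal_inv_of_pos (hφ.1 R hR)]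

/-- For `n ≥ 2`, `k ∈ [2,n]`, `Φ` Young, `φ ∈ G₁^dec` and
`a₀,…,a_{k−1} > 0`, the cube-based Orlicz–Morrey functional of
`χ_{∏_{j<k}[0,a_j] × ℝ^{n−k}}` equals
`sup_{R>0} (1/φ(R)) [Φ⁻¹(R^k / ∏_{j<k} min(a_j,R))]⁻¹`. -/
theorem statement15 {n k : ℕ} (hn : 2 ≤ n) (hk2 : 2 ≤ k) (hkn : k ≤ n)
    (Φ φ : ℝ → ℝ) (hΦ : IsYoung Φ) (hφ : G1dec φ)
    (a : Fin n → ℝ) (ha : ∀ j : Fin n, (j : ℕ) < k → 0 < a j) :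
    (⨆ (b : EuclideanSpace ℝ (Fin n)) (R : ℝ) (_ : 0 < R),
        (ENNReal.ofReal (φ R))⁻¹ * cubeLux Φ b (R / 2)
          (Set.indicator {x : EuclideanSpace ℝ (Fin n) |
              ∀ j : Fin n, (j : ℕ) < k → x j ∈ Set.Icc 0 (a j)} (fun _ => (1 : ℝ)))) =
      ⨆ (R : ℝ) (_ : 0 < R),
        ENNReal.ofReal ((φ R)⁻¹ *
          (yInv Φ (R ^ k /
            ∏ j ∈ Finset.univ.filter (fun j : Fin n => (j : ℕ) < k), min (a j) R))⁻¹) :=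
  statement15_general hkn Φ φ hΦ hφ a ha
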